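/- arXiv:2211.00802 — 4 statements merged into one kernel-verified Lean document; each statement's English description precedes it below -/
import Mathlib

section
/- Let p and q be probability mass functions on a finite set X with p(x) > 0 and q(x) > 0 for all x. Let N : X → Set X define a neighborhood structure whose induced directed graph G (edges x → y for y ∈ N(x)) is weakly connected on X. If for every x ∈ X and every y ∈ N(x) we have (p(y) - p(x))/p(x) = (q(y) - q(x))/q(x), then p = q. -/
/-- Completeness of the Concrete score: if two strictly positive pmfs on a finite set
have the same Concrete score with respect to a neighborhood structure whose induced
graph is weakly connected, then they are equal. -/
theorem concrete_score_completeness {X : Type*} [Fintype X] [Nonempty X]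
    (p q : X → ℝ) (hp : ∀ x, 0 < p x) (hq : ∀ x, 0 < q x)
    (hps : ∑ x, p x = 1) (hqs : ∑ x, q x = 1)
    (N : X → Set X)
    (hconn : (SimpleGraph.fromRel (fun x y => y ∈ N x)).Connected)
    (hscore : ∀ x, ∀ y ∈ N x, (p y - p x) / p x = (q y - q x) / q x) :
    p = q := by
  set G := SimpleGraph.fromRel (fun x y => y ∈ N x) with hG
  set r : X → ℝ := fun x => p x / q x with hr
  -- score equality along an edge gives equal ratios
  have hedge : ∀ x y, (y ∈ N x) → r x = r y := by
    intro x y hxy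
    have h := hscore x y hxy
    have hpx := (hp x).ne'
    have hpy := (hp y).ne'
    have hqx := (hq x).ne'
    have hqy := (hq y).ne'
    simp only [hr]
    rw [div_eq_div_iff hqx hqy]
    field_simp at h
    nlinarith [h]
  have hadj : ∀ x y, G.Adj x y → r x = r y := by
    intro x y hxy
    rw [hG, SimpleGraph.fromRel_adj] at hxy
    rcases hxy.2 with h | h
    · exact hedge x y h
    · exact (hedge y x h).symm
  have hreach : ∀ x y, G.Reachable x y → r x = r y := by
    intro x y hxy
    obtain ⟨w⟩ := hxy
    induction w with
    | nil => rfl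
    | cons h _ ih => exact (hadj _ _ h).trans ih
  obtain ⟨x0⟩ := (inferInstance : Nonempty X)
  have hconst : ∀ x, r x = r x0 := fun x => hreach x x0 (hconn.preconnected x x0)
  have hpq : ∀ x, p x = r x0 * q x := by
    intro x
    have h := hconst x
    simp only [hr] at h
    rw [div_eq_div_iff (hq x).ne' (hq x0).ne'] at h
    simp only [hr]
    rw [div_mul_eq_mul_div, eq_div_iff (hq x0).ne']
    linarith
  have hsum : (1 : ℝ) = r x0 * 1 := by
    nth_rewrite 1 [← hps]
    nth_rewrite 1 [← hqs]
    rw [Finset.mul_sum]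
    exact Finset.sum_congr rfl fun x _ => hpq x
  have : r x0 = 1 := by linarith
  funext x
  have := hpq x
  rw [‹r x0 = 1›] at this
  linarith
end

section
/- Let p be a strictly positive probability mass function on a finite set X with neighborhood structure N, and let c_θ : X → ℝ^k be any family of functions indexed by parameters θ. Then the function θ ↦ ∑_x p(x) ‖c_θ(x) − c_p(x; N)‖² differs from J(θ) = ∑_x ∑_{i=1}^{k} [ p(x) (c_θ(x)_i² + 2 c_θ(x)_i) − 2 p(x_{n_i}) c_θ(x)_i ] by a constant independent of θ. In particular they have the same minimizers. -/
/-- The CSM least-squares objective differs from the tractable objective J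
by a constant independent of the parameter θ. -/
theorem csm_objective_eq_tractable_add_const {X : Type*} [Fintype X] {Θ : Type*}
    (p : X → ℝ) (hp : ∀ x, 0 < p x) (hps : ∑ x, p x = 1)
    {k : ℕ} (N : X → Fin k → X) (c : Θ → X → Fin k → ℝ) :
    ∃ C : ℝ, ∀ θ : Θ,
      ∑ x, p x * ∑ i, (c θ x i - (p (N x i) - p x) / p x) ^ 2
        = (∑ x, ∑ i, (p x * ((c θ x i) ^ 2 + 2 * c θ x i)
            - 2 * p (N x i) * c θ x i)) + C := by
  refine ⟨∑ x, ∑ i, p x * ((p (N x i) - p x) / p x) ^ 2, fun θ => ?_⟩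
  rw [← Finset.sum_add_distrib]
  refine Finset.sum_congr rfl fun x _ => ?_
  rw [Finset.mul_sum, ← Finset.sum_add_distrib]
  refine Finset.sum_congr rfl fun i _ => ?_
  have h : p x ≠ 0 := (hp x).ne'
  field_simp
  ring
end

section
/- Let p be a probability mass function on a finite set X and let q̃(·|x) be transition kernels on a finite set X̃ with q̃(x̃|x) > 0 for all x, x̃. Define the perturbed distribution p̃(x̃) = ∑_x p(x) q̃(x̃|x) and the posterior q(x|x̃) = p(x) q̃(x̃|x)/p̃(x̃). Then for any neighborhood structure N on X̃, the Concrete score of p̃ is the posterior average of the kernel Concrete scores: c_{p̃}(x̃; N) = ∑_x c_{q̃(·|x)}(x̃; N) q(x|x̃). -/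
/-- The Concrete score of the perturbed distribution p̃ is the posterior average
of the Concrete scores of the transition kernels. -/
theorem concrete_score_perturbed_eq_posterior_avg
    {X Xt : Type*} [Fintype X] [Fintype Xt]
    (p : X → ℝ) (hp : ∀ x, 0 < p x) (hps : ∑ x, p x = 1)
    (qt : X → Xt → ℝ) (hqt : ∀ x y, 0 < qt x y) (hqts : ∀ x, ∑ y, qt x y = 1)
    {k : ℕ} (N : Xt → Fin k → Xt) :
    ∀ (y : Xt) (i : Fin k),
      ((∑ x, p x * qt x (N y i)) - ∑ x, p x * qt x y) / (∑ x, p x * qt x y)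
        = ∑ x, ((qt x (N y i) - qt x y) / qt x y)
            * (p x * qt x y / ∑ x', p x' * qt x' y) := by
  intro y i
  have hne : (Finset.univ : Finset X).Nonempty := by
    by_contra h
    rw [Finset.not_nonempty_iff_eq_empty] at h
    rw [h, Finset.sum_empty] at hps
    norm_num at hps
  have hS : 0 < ∑ x', p x' * qt x' y :=
    Finset.sum_pos (fun x _ => mul_pos (hp x) (hqt x y)) hne
  have key : ∀ x : X, ((qt x (N y i) - qt x y) / qt x y)
      * (p x * qt x y / ∑ x', p x' * qt x' y)
      = (p x * qt x (N y i) - p x * qt x y) / ∑ x', p x' * qt x' y := by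
    intro x
    have h1 : qt x y ≠ 0 := (hqt x y).ne'
    have h2 : (∑ x', p x' * qt x' y) ≠ 0 := hS.ne'
    field_simp
  simp only [key]
  rw [← Finset.sum_div, Finset.sum_sub_distrib]
end

section
/- (Corrected multi-class ratio matching identity.) Let p be a strictly positive probability mass function on X = S^d for a finite alphabet S, and q_θ another strictly positive pmf on X. With g(z) = 1/(1+z), the objective ∑_x p(x) ∑_{i=1}^d ∑_{ξ ∈ S} [g(p(ξ, x^{\i})/p(∼ξ, x^{\i})) − g(q_θ(ξ, x^{\i})/q_θ(∼ξ, x^{\i}))]² differs by a constant (independent of θ) from ∑_x p(x) ∑_{i=1}^d [(1 − q_θ(x_i | x^{\i}))² + ∑_{ξ ≠ x_i} q_θ(ξ | x^{\i})²]. -/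
/-!
Since `g(a / b) = b / (a + b)`, the term `g(p(ξ, x^{\i}) / p(∼ξ, x^{\i}))` equals
`1 - p(ξ | x^{\i})`, so each summand of the ratio matching objective is the squared distance
`∑_ξ (q(ξ | x^{\i}) - p(ξ | x^{\i}))²` of the two conditionals. The summand of the simplified
objective is the Brier score of the forecast `q(· | x^{\i})` at the outcome `x_i`. Averaging
that score over `x_i ∼ p(· | x^{\i})` gives the squared distance plus `1 - ∑_ξ p(ξ | x^{\i})²`,
which does not involve `q`; and inside `∑_x p(x)` this average over `x_i` costs nothing,
by the tower property of conditional expectation.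
-/

open Finset Function

section

variable {S : Type*} [Fintype S] [DecidableEq S]

def brierScore (c : S → ℝ) (ζ : S) : ℝ :=
  (1 - c ζ) ^ 2 + ∑ ξ ∈ univ.erase ζ, c ξ ^ 2

lemma brierScore_eq (c : S → ℝ) (ζ : S) :
    brierScore c ζ = ∑ ξ, c ξ ^ 2 + 1 - 2 * c ζ := by
  rw [brierScore, ← add_sum_erase _ _ (mem_univ ζ)]
  ring

lemma sum_mul_brierScore {c : S → ℝ} (hc : ∑ ξ, c ξ = 1) (c' : S → ℝ) :
    ∑ ζ, c ζ * brierScore c' ζ = ∑ ξ, (c' ξ - c ξ) ^ 2 + (1 - ∑ ξ, c ξ ^ 2) := by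
  simp only [brierScore_eq, mul_sub, mul_add, sum_sub_distrib, sum_add_distrib, ← sum_mul, hc,
    sub_sq, mul_one, one_mul]
  simp only [mul_left_comm _ (2 : ℝ), mul_assoc, ← mul_sum, mul_comm (c _)]
  ring

lemma inv_one_add_div_sum_erase (hS : 1 < Fintype.card S) {a : S → ℝ} (ha : ∀ s, 0 < a s)
    (ξ : S) : (1 + a ξ / ∑ η ∈ univ.erase ξ, a η)⁻¹ = 1 - a ξ / ∑ η, a η := by
  have hrest : 0 < ∑ η ∈ univ.erase ξ, a η := by
    refine sum_pos (fun η _ => ha η) ?_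
    rw [← card_pos, card_erase_of_mem (mem_univ ξ), card_univ]
    omega
  have htotal : ∑ η ∈ univ.erase ξ, a η + a ξ ≠ 0 := (add_pos hrest (ha ξ)).ne'
  rw [← sum_erase_add _ _ (mem_univ ξ), one_add_div hrest.ne', inv_div, one_sub_div htotal,
    add_sub_cancel_right]

end

section

variable {ι S : Type*} [DecidableEq ι] [Fintype S]

noncomputable def condProb (p : (ι → S) → ℝ) (x : ι → S) (i : ι) (ξ : S) : ℝ :=
  p (update x i ξ) / ∑ η, p (update x i η)

variable {p : (ι → S) → ℝ}

lemma condProb_update (x : ι → S) (i : ι) (ζ : S) :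
    condProb p (update x i ζ) i = condProb p x i := by
  funext ξ
  simp only [condProb, update_idem]

lemma sum_condProb [Nonempty S] (hp : ∀ x, 0 < p x) (x : ι → S) (i : ι) :
    ∑ ξ, condProb p x i ξ = 1 := by
  have hZ : 0 < ∑ η, p (update x i η) := sum_pos (fun η _ => hp _) univ_nonempty
  simp only [condProb, ← sum_div, div_self hZ.ne']

theorem sum_mul_sum_condProb_mul [Fintype ι] [Nonempty S] (hp : ∀ x, 0 < p x) (i : ι)
    (F : (ι → S) → ℝ) :
    ∑ x, p x * ∑ ξ, condProb p x i ξ * F (update x i ξ) = ∑ x, p x * F x := by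
  -- `(x, ξ) ↦ (update x i ξ, x i)` swaps a configuration with its resampled copy.
  let resample : (ι → S) × S → (ι → S) × S := fun xξ => (update xξ.1 i xξ.2, xξ.1 i)
  have hinv : Involutive resample := fun xξ => by simp [resample]
  calc ∑ x, p x * ∑ ξ, condProb p x i ξ * F (update x i ξ)
      = ∑ xξ : (ι → S) × S, p xξ.1 * p (update xξ.1 i xξ.2) * F (update xξ.1 i xξ.2)
          / ∑ η, p (update xξ.1 i η) := by
        simp only [Fintype.sum_prod_type, mul_sum, condProb]
        exact sum_congr rfl fun x _ => sum_congr rfl fun ξ _ => by ring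
    _ = ∑ xξ : (ι → S) × S, p (update xξ.1 i xξ.2) * p xξ.1 * F xξ.1
          / ∑ η, p (update xξ.1 i η) :=
        (Fintype.sum_bijective resample hinv.bijective _ _ fun xξ => by simp [resample]).symm
    _ = ∑ x, p x * F x * ∑ ξ, condProb p x i ξ := by
        simp only [Fintype.sum_prod_type, mul_sum, condProb]
        exact sum_congr rfl fun x _ => sum_congr rfl fun ξ _ => by ring
    _ = ∑ x, p x * F x := by simp only [sum_condProb hp, mul_one]

lemma inv_one_add_ratio_eq_one_sub_condProb [DecidableEq S] (hS : 1 < Fintype.card S)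
    (hp : ∀ x, 0 < p x) (x : ι → S) (i : ι) (ξ : S) :
    (1 + p (update x i ξ) / ∑ η ∈ univ.erase ξ, p (update x i η))⁻¹ = 1 - condProb p x i ξ :=
  inv_one_add_div_sum_erase hS (fun _ => hp _) ξ

end

theorem corrected_ratio_matching_general {S : Type*} [Fintype S] [DecidableEq S]
    (hS : 1 < Fintype.card S) {d : ℕ} {Θ : Type*}
    (p : (Fin d → S) → ℝ) (hp : ∀ x, 0 < p x)
    (q : Θ → (Fin d → S) → ℝ) (hq : ∀ θ x, 0 < q θ x) :
    ∃ C : ℝ, ∀ θ : Θ,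
      ∑ x, p x * ∑ i : Fin d, ∑ ξ : S,
          ((1 + p (Function.update x i ξ)
                / ∑ η ∈ univ.erase ξ, p (Function.update x i η))⁻¹
            - (1 + q θ (Function.update x i ξ)
                / ∑ η ∈ univ.erase ξ, q θ (Function.update x i η))⁻¹) ^ 2
        = (∑ x, p x * ∑ i : Fin d,
            ((1 - q θ (Function.update x i (x i))
                / ∑ η : S, q θ (Function.update x i η)) ^ 2
              + ∑ ξ ∈ univ.erase (x i),
                  (q θ (Function.update x i ξ)
                    / ∑ η : S, q θ (Function.update x i η)) ^ 2)) + C := by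
  have : Nonempty S := Fintype.card_pos_iff.mp (by omega)
  refine ⟨∑ x, p x * ∑ i, (∑ ξ, condProb p x i ξ ^ 2 - 1), fun θ => ?_⟩
  have hsummand (x : Fin d → S) (i : Fin d) :
      ∑ ξ, ((1 + p (update x i ξ) / ∑ η ∈ univ.erase ξ, p (update x i η))⁻¹
          - (1 + q θ (update x i ξ) / ∑ η ∈ univ.erase ξ, q θ (update x i η))⁻¹) ^ 2
        = ∑ ζ, condProb p x i ζ * brierScore (condProb (q θ) (update x i ζ) i) (update x i ζ i)
          + (∑ ξ, condProb p x i ξ ^ 2 - 1) := by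
    simp only [inv_one_add_ratio_eq_one_sub_condProb hS hp,
      inv_one_add_ratio_eq_one_sub_condProb hS (hq θ), condProb_update, update_self,
      sum_mul_brierScore (sum_condProb hp x i), sub_sub_sub_cancel_left]
    ring
  calc _ = ∑ i, ∑ x, p x * ∑ ζ, condProb p x i ζ
              * brierScore (condProb (q θ) (update x i ζ) i) (update x i ζ i)
            + ∑ x, p x * ∑ i, (∑ ξ, condProb p x i ξ ^ 2 - 1) := by
        simp only [hsummand, sum_add_distrib, mul_add, mul_sum]
        rw [sum_comm]
    _ = ∑ i, ∑ x, p x * brierScore (condProb (q θ) x i) (x i)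
            + ∑ x, p x * ∑ i, (∑ ξ, condProb p x i ξ ^ 2 - 1) := by
        congr 1
        exact sum_congr rfl fun i _ =>
          sum_mul_sum_condProb_mul hp i fun y => brierScore (condProb (q θ) y i) (y i)
    _ = _ := by
        simp only [mul_sum]
        rw [sum_comm]
        rfl

/-- Corrected multi-class ratio matching identity: with g(z) = 1/(1+z), the
generalized ratio matching objective differs by a θ-independent constant from the
simplified objective. -/
theorem corrected_ratio_matching {S : Type*} [Fintype S] [DecidableEq S]
    (hS : 1 < Fintype.card S) {d : ℕ} {Θ : Type*}
    (p : (Fin d → S) → ℝ) (hp : ∀ x, 0 < p x) (hps : ∑ x, p x = 1)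
    (q : Θ → (Fin d → S) → ℝ) (hq : ∀ θ x, 0 < q θ x)
    (hqs : ∀ θ, ∑ x, q θ x = 1) :
    ∃ C : ℝ, ∀ θ : Θ,
      ∑ x, p x * ∑ i : Fin d, ∑ ξ : S,
          ((1 + p (Function.update x i ξ)
                / ∑ η ∈ univ.erase ξ, p (Function.update x i η))⁻¹
            - (1 + q θ (Function.update x i ξ)
                / ∑ η ∈ univ.erase ξ, q θ (Function.update x i η))⁻¹) ^ 2
        = (∑ x, p x * ∑ i : Fin d,
            ((1 - q θ (Function.update x i (x i))
                / ∑ η : S, q θ (Function.update x i η)) ^ 2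
              + ∑ ξ ∈ univ.erase (x i),
                  (q θ (Function.update x i ξ)
                    / ∑ η : S, q θ (Function.update x i η)) ^ 2)) + C :=
  corrected_ratio_matching_general hS p hp q hq
end
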